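/- arXiv:1610.03951 — 4 statements merged into one kernel-verified Lean document; each statement's English description precedes it below -/
import Mathlib

section
/- Let n ≥ 1 and d ≥ 1 be integers and let P_1, …, P_n ∈ ℂ[x_0, …, x_n] be homogeneous polynomials of degree d forming a regular sequence in ℂ[x_0, …, x_n]. Let u be a positive integer divisible by d, and let V_u denote the ℂ-vector space of homogeneous polynomials of degree u in ℂ[x_0, …, x_n] together with 0. For (i) = (i_1, …, i_n) ∈ ℕ^n with σ(i) := i_1 + ⋯ + i_n ≤ u/d, define the subspace W_{(i)} = Σ_{(j) ≥ (i)} P_1^{j_1} ⋯ P_n^{j_n} · V_{u − d σ(j)}, where the sum is over (j) ∈ ℕ^n with d σ(j) ≤ u and (j) ≥ (i) in the lexicographic order. If (i)' is the immediate successor of (i) in the lexicographic ordering among such tuples and d σ(i) < u − n d, then dim_ℂ (W_{(i)} / W_{(i)'}) = d^n. -/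
/-!
Multiplication by `P^(i)` maps `V_m`, `m = u − dσ(i)`, onto `W_(i)` modulo `W_(i)'`, because every
admissible `(j) > (i)` satisfies `(j) ≥ (i)'`. Its kernel is `I_m`, where `I = (P_1, …, P_n)`:
if `P^(i) f` lies in the ideal of the monomials `P^(j)` with `(j) > (i)`, cancelling `P_1^{i_1}`,
then `P_2^{i_2}` modulo `P_1`, and so on, leaves `f ∈ I`; conversely `P^(i) P_s V_{m−d} ⊆ W_(i)'`.
Hence the quotient has dimension `dim V_m − dim I_m`. Regularity gives the recursion
`dim (P_1..P_{k+1})_m = dim (P_1..P_k)_m + dim V_{m−d} − dim (P_1..P_k)_{m−d}`, which is also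
satisfied by the number of degree-`m` monomials whose exponents of `x_1, …, x_k` are `< d`; for
`k = n` and `m ≥ n(d − 1)` there are exactly `d^n` of them.
-/

open MvPolynomial

/-- The Corvaja–Zannier filtration: for a tuple `i ∈ ℕ^n`,
`W_{(i)} = Σ_{(j) ≥ (i), dσ(j) ≤ u} P_1^{j_1} ⋯ P_n^{j_n} · V_{u − dσ(j)}`,
a subspace of the space `V_u` of homogeneous polynomials of degree `u`. -/
noncomputable def czFiltration (n d u : ℕ)
    (P : Fin n → MvPolynomial (Fin (n + 1)) ℂ) (i : Fin n → ℕ) :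
    Submodule ℂ (MvPolynomial (Fin (n + 1)) ℂ) :=
  ⨆ (j : Fin n → ℕ) (_ : toLex i ≤ toLex j) (_ : d * (∑ t, j t) ≤ u),
    Submodule.map (LinearMap.mulLeft ℂ (∏ t, P t ^ j t))
      (homogeneousSubmodule (Fin (n + 1)) ℂ (u - d * (∑ t, j t)))

open Module

section LinearAlgebra

variable {K M N : Type*} [Field K] [AddCommGroup M] [Module K M] [AddCommGroup N] [Module K N]

theorem Submodule.finrank_quotient_add_finrank_inf_comap (φ : M →ₗ[K] N) {V : Submodule K M}
    [FiniteDimensional K V] {W W' : Submodule K N} (hW : W = V.map φ ⊔ W') :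
    finrank K (W ⧸ W'.comap W.subtype) + finrank K ↥(V ⊓ W'.comap φ) = finrank K V := by
  have hφ : ∀ v ∈ V, φ v ∈ W := fun v hv => hW ▸ mem_sup_left (mem_map_of_mem hv)
  let ψ := (W'.comap W.subtype).mkQ ∘ₗ φ.restrict hφ
  have hψ : Function.Surjective ψ := by
    intro z
    obtain ⟨w, rfl⟩ := mkQ_surjective _ z
    have hw : (w : N) ∈ V.map φ ⊔ W' := hW ▸ w.2
    obtain ⟨_, ⟨v, hv, rfl⟩, w', hw', hsum⟩ := mem_sup.mp hw
    refine ⟨⟨v, hv⟩, (Quotient.eq _).mpr ?_⟩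
    simpa [← hsum] using neg_mem hw'
  have hker : LinearMap.ker ψ = (V ⊓ W'.comap φ).comap V.subtype := by
    ext v
    simp [ψ, Quotient.mk_eq_zero]
  rw [← LinearMap.finrank_range_add_finrank_ker ψ, LinearMap.range_eq_top.mpr hψ, finrank_top,
    hker, (comapSubtypeEquivOfLe inf_le_left).finrank_eq]

end LinearAlgebra

namespace MvPolynomial

variable {σ R : Type*} [CommSemiring R]

attribute [local instance] gradedAlgebra in
theorem homogeneousComponent_mul_of_isHomogeneous {x : MvPolynomial σ R} {d : ℕ}
    (hx : x.IsHomogeneous d) (c : MvPolynomial σ R) (m : ℕ) :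
    homogeneousComponent m (c * x) = if d ≤ m then homogeneousComponent (m - d) c * x else 0 := by
  rw [← decomposition.decompose'_apply, ← decomposition.decompose'_apply]
  exact DirectSum.coe_decompose_mul_of_right_mem _ m ((mem_homogeneousSubmodule d x).mpr hx)

theorem exists_sum_mul_of_mem_span_range {ι : Type*} [Fintype ι] {x : ι → MvPolynomial σ R}
    {d m : ℕ} (hx : ∀ s, (x s).IsHomogeneous d) (hdm : d ≤ m) {g : MvPolynomial σ R}
    (hg : g.IsHomogeneous m) (hmem : g ∈ Ideal.span (Set.range x)) :
    ∃ h : ι → MvPolynomial σ R, (∀ s, (h s).IsHomogeneous (m - d)) ∧ ∑ s, h s * x s = g := by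
  obtain ⟨c, rfl⟩ := Ideal.mem_span_range_iff_exists_fun.mp hmem
  refine ⟨fun s => homogeneousComponent (m - d) (c s),
    fun s => homogeneousComponent_isHomogeneous _ _, ?_⟩
  rw [← homogeneousComponent_eq_self hg, map_sum]
  simp [homogeneousComponent_mul_of_isHomogeneous (hx _), hdm]

instance [Finite σ] (m : ℕ) : Module.Finite R (homogeneousSubmodule σ R m) :=
  Module.Finite.iff_fg.mpr (homogeneousSubmodule_fg σ R m)

end MvPolynomial

section RegularSequence

variable {R : Type*} [CommRing R] {n : ℕ}

def prefixSpan (x : Fin n → R) (k : ℕ) : Ideal R :=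
  Ideal.span {g | ∃ s : Fin n, (s : ℕ) < k ∧ g = x s}

def IsRegularModulo (J : Ideal R) (x : Fin n → R) : Prop :=
  ∀ (t : Fin n) (f : R), x t * f ∈ J ⊔ prefixSpan x t → f ∈ J ⊔ prefixSpan x t

def lexAboveSpan (x : Fin n → R) (i : Fin n → ℕ) : Ideal R :=
  Ideal.span {g | ∃ j : Fin n → ℕ, toLex i < toLex j ∧ g = ∏ t, x t ^ j t}

lemma prefixSpan_zero (x : Fin n → R) : prefixSpan x 0 = ⊥ := by
  simp [prefixSpan]

lemma prefixSpan_succ (x : Fin n → R) {k : ℕ} (hk : k < n) :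
    prefixSpan x (k + 1) = prefixSpan x k ⊔ Ideal.span {x ⟨k, hk⟩} := by
  rw [prefixSpan, prefixSpan, sup_comm, ← Ideal.span_insert]
  congr 1
  ext g
  simp only [Set.mem_ofPred_eq, Set.mem_insert_iff, Nat.lt_succ_iff_lt_or_eq]
  aesop

lemma prefixSpan_cons_succ (x₀ : R) (x : Fin n → R) (k : ℕ) :
    prefixSpan (Fin.cons x₀ x : Fin (n + 1) → R) (k + 1) = Ideal.span {x₀} ⊔ prefixSpan x k := by
  rw [prefixSpan, prefixSpan, ← Ideal.span_insert]
  congr 1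
  ext g
  simp [Fin.exists_fin_succ]

lemma prefixSpan_self (x : Fin n → R) : prefixSpan x n = Ideal.span (Set.range x) := by
  rw [prefixSpan]
  congr 1
  ext g
  simp [eq_comm]

lemma Ideal.mem_of_pow_mul_mem {J : Ideal R} {x : R} (hx : ∀ f, x * f ∈ J → f ∈ J) (a : ℕ) {f : R}
    (h : x ^ a * f ∈ J) : f ∈ J := by
  induction a generalizing f with
  | zero => simpa using h
  | succ a ih => exact hx f (ih (by rwa [pow_succ, mul_assoc] at h))

lemma IsRegularModulo.tail {J : Ideal R} {x₀ : R} {x : Fin n → R}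
    (hx : IsRegularModulo J (Fin.cons x₀ x : Fin (n + 1) → R)) :
    IsRegularModulo (J ⊔ Ideal.span {x₀}) x := fun t f => by
  simpa only [Fin.cons_succ, Fin.val_succ, prefixSpan_cons_succ, sup_assoc] using hx t.succ f

lemma IsRegularModulo.head {J : Ideal R} {x₀ : R} {x : Fin n → R}
    (hx : IsRegularModulo J (Fin.cons x₀ x : Fin (n + 1) → R)) (f : R) (h : x₀ * f ∈ J) :
    f ∈ J := by
  simpa [prefixSpan_zero] using hx 0 f (by simpa [prefixSpan_zero] using h)

lemma lexAboveSpan_cons_le (x₀ : R) (x : Fin n → R) (a : ℕ) (i : Fin n → ℕ) :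
    lexAboveSpan (Fin.cons x₀ x : Fin (n + 1) → R) (Fin.cons a i)
      ≤ Ideal.span {x₀ ^ a} * (Ideal.span {x₀} ⊔ lexAboveSpan x i) := by
  refine Ideal.span_le.mpr ?_
  rintro _ ⟨j, hij, rfl⟩
  rw [← Fin.cons_self_tail j] at hij
  rw [SetLike.mem_coe, Ideal.mem_span_singleton_mul, Fin.prod_univ_succ]
  simp only [Fin.cons_zero, Fin.cons_succ]
  rcases (Fin.pi_lex_lt_cons_cons _).mp hij with hlt | ⟨heq, hlex⟩
  · refine ⟨x₀ * (x₀ ^ (j 0 - a - 1) * ∏ t, x t ^ Fin.tail j t),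
      Ideal.mem_sup_left (Ideal.mul_mem_right _ _ (Ideal.mem_span_singleton_self x₀)), ?_⟩
    rw [← mul_assoc, ← mul_assoc, ← pow_succ, ← pow_add]
    beta_reduce at hlt
    congr 2
    omega
  · exact ⟨_, Ideal.mem_sup_right (Ideal.subset_span ⟨Fin.tail j, hlex, rfl⟩), by rw [heq]; rfl⟩

theorem IsRegularModulo.mem_of_prod_pow_mul_mem {J : Ideal R} {x : Fin n → R}
    (hx : IsRegularModulo J x) (i : Fin n → ℕ) {f : R}
    (h : (∏ t, x t ^ i t) * f ∈ J ⊔ lexAboveSpan x i) : f ∈ J ⊔ Ideal.span (Set.range x) := by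
  induction n generalizing J with
  | zero =>
    have hbot : lexAboveSpan x i = ⊥ := Ideal.span_eq_bot.mpr fun _ ⟨j, hij, _⟩ =>
      absurd hij (by rw [Subsingleton.elim i j]; exact lt_irrefl _)
    exact Ideal.mem_sup_left (by simpa [hbot] using h)
  | succ n ih =>
    induction x using Fin.consCases with | cons x₀ x =>
    induction i using Fin.consCases with | cons a i =>
    set y := (∏ t, x t ^ i t) * f
    have hy : x₀ ^ a * y ∈ J ⊔ Ideal.span {x₀ ^ a} * (Ideal.span {x₀} ⊔ lexAboveSpan x i) := by
      refine sup_le_sup_left (lexAboveSpan_cons_le x₀ x a i) J ?_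
      simpa [Fin.prod_univ_succ, y, mul_assoc] using h
    obtain ⟨c, hc, _, hz', hcz⟩ := Submodule.mem_sup.mp hy
    obtain ⟨z, hz, rfl⟩ := Ideal.mem_span_singleton_mul.mp hz'
    have hyz : y - z ∈ J :=
      Ideal.mem_of_pow_mul_mem hx.head a (by rwa [mul_sub, ← hcz, add_sub_cancel_right])
    have hf := ih hx.tail i (show y ∈ _ from by
      rw [← sub_add_cancel y z, sup_assoc]
      exact add_mem (Ideal.mem_sup_left hyz) (Ideal.mem_sup_right hz))
    simpa [Fin.range_cons, Ideal.span_insert, sup_assoc] using hf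

end RegularSequence

namespace MvPolynomial

section GradedPiece

variable {σ K : Type*} [Field K]

noncomputable def gradedPiece (I : Ideal (MvPolynomial σ K)) (m : ℕ) :
    Submodule K (MvPolynomial σ K) :=
  I.restrictScalars K ⊓ homogeneousSubmodule σ K m

instance [Finite σ] (I : Ideal (MvPolynomial σ K)) (m : ℕ) :
    FiniteDimensional K (gradedPiece I m) :=
  Submodule.finiteDimensional_of_le inf_le_right

lemma gradedPiece_mono {I J : Ideal (MvPolynomial σ K)} (h : I ≤ J) (m : ℕ) :
    gradedPiece I m ≤ gradedPiece J m :=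
  inf_le_inf_right _ fun _ hp => h hp

@[simp]
lemma gradedPiece_bot (m : ℕ) : gradedPiece (⊥ : Ideal (MvPolynomial σ K)) m = ⊥ := by
  simp [gradedPiece]

attribute [local instance] gradedAlgebra

lemma exists_add_homogeneousComponent_of_mem_gradedPiece_sup {I : Ideal (MvPolynomial σ K)}
    (hI : I.IsHomogeneous (homogeneousSubmodule σ K)) {x p : MvPolynomial σ K} {m : ℕ}
    (hp : p ∈ gradedPiece (I ⊔ Ideal.span {x}) m) :
    ∃ a ∈ gradedPiece I m, ∃ b, a + homogeneousComponent m (b * x) = p := by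
  obtain ⟨hpI, hpV⟩ := hp
  obtain ⟨a, ha, _, hbx, rfl⟩ := Submodule.mem_sup.mp hpI
  obtain ⟨b, rfl⟩ := Ideal.mem_span_singleton'.mp hbx
  refine ⟨homogeneousComponent m a, ⟨homogeneousComponent_mem_of_mem hI ha m,
    homogeneousComponent_mem m a⟩, b, ?_⟩
  rw [← map_add, homogeneousComponent_eq_self hpV]

lemma gradedPiece_sup_span_singleton {I : Ideal (MvPolynomial σ K)}
    (hI : I.IsHomogeneous (homogeneousSubmodule σ K)) {x : MvPolynomial σ K} {d m : ℕ}
    (hx : x.IsHomogeneous d) (hdm : d ≤ m) :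
    gradedPiece (I ⊔ Ideal.span {x}) m
      = (homogeneousSubmodule σ K (m - d)).map (LinearMap.mulLeft K x) ⊔ gradedPiece I m := by
  refine le_antisymm (fun p hp => ?_) (sup_le ?_ ?_)
  · obtain ⟨a, ha, b, rfl⟩ := exists_add_homogeneousComponent_of_mem_gradedPiece_sup hI hp
    rw [homogeneousComponent_mul_of_isHomogeneous hx, if_pos hdm, add_comm, mul_comm]
    exact Submodule.add_mem_sup ⟨_, homogeneousComponent_mem _ _, rfl⟩ ha
  · rintro _ ⟨f, hf, rfl⟩
    refine ⟨Ideal.mem_sup_right (Ideal.mul_mem_right f _ (Ideal.mem_span_singleton_self x)), ?_⟩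
    simpa [Nat.add_sub_cancel' hdm] using hx.mul hf
  · exact gradedPiece_mono le_sup_left m

lemma gradedPiece_sup_span_singleton_of_lt {I : Ideal (MvPolynomial σ K)}
    (hI : I.IsHomogeneous (homogeneousSubmodule σ K)) {x : MvPolynomial σ K} {d m : ℕ}
    (hx : x.IsHomogeneous d) (hmd : m < d) :
    gradedPiece (I ⊔ Ideal.span {x}) m = gradedPiece I m := by
  refine le_antisymm (fun p hp => ?_) (gradedPiece_mono le_sup_left m)
  obtain ⟨a, ha, b, rfl⟩ := exists_add_homogeneousComponent_of_mem_gradedPiece_sup hI hp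
  rwa [homogeneousComponent_mul_of_isHomogeneous hx, if_neg (by omega), add_zero]

lemma inf_comap_mulLeft_gradedPiece {I : Ideal (MvPolynomial σ K)} {x : MvPolynomial σ K}
    (hreg : ∀ f, x * f ∈ I → f ∈ I) {d m : ℕ} (hx : x.IsHomogeneous d) (hdm : d ≤ m) :
    homogeneousSubmodule σ K (m - d) ⊓ (gradedPiece I m).comap (LinearMap.mulLeft K x)
      = gradedPiece I (m - d) := by
  ext f
  refine ⟨fun ⟨hfV, hxf, _⟩ => ⟨hreg f hxf, hfV⟩, fun ⟨hfI, hfV⟩ => ⟨hfV, ?_, ?_⟩⟩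
  · exact Ideal.mul_mem_left I x hfI
  · simpa [Nat.add_sub_cancel' hdm] using hx.mul hfV

theorem finrank_gradedPiece_sup_span_singleton [Finite σ] {I : Ideal (MvPolynomial σ K)}
    (hI : I.IsHomogeneous (homogeneousSubmodule σ K)) {x : MvPolynomial σ K}
    (hreg : ∀ f, x * f ∈ I → f ∈ I) {d m : ℕ} (hx : x.IsHomogeneous d) (hdm : d ≤ m) :
    finrank K (gradedPiece (I ⊔ Ideal.span {x}) m) + finrank K (gradedPiece I (m - d))
      = finrank K (gradedPiece I m) + finrank K (homogeneousSubmodule σ K (m - d)) := by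
  have hquot := Submodule.finrank_quotient_add_finrank_inf_comap (LinearMap.mulLeft K x)
    (gradedPiece_sup_span_singleton hI hx hdm)
  rw [inf_comap_mulLeft_gradedPiece hreg hx hdm] at hquot
  have hW := Submodule.finrank_quotient_add_finrank
    ((gradedPiece I m).comap (gradedPiece (I ⊔ Ideal.span {x}) m).subtype)
  rw [(Submodule.comapSubtypeEquivOfLe (gradedPiece_mono le_sup_left m)).finrank_eq] at hW
  rw [← hW, ← hquot]
  ring

end GradedPiece

end MvPolynomial

section BoundedExponents

def boundedExponents (n d k m : ℕ) : Set (Fin (n + 1) → ℕ) :=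
  {a | ∑ t, a t = m ∧ ∀ t : Fin n, (t : ℕ) < k → a t.succ < d}

variable {n d k m : ℕ}

lemma boundedExponents_finite : (boundedExponents n d k m).Finite :=
  (Set.finite_Iic fun _ => m).subset fun _ ha t =>
    ha.1 ▸ Finset.single_le_sum (fun _ _ => Nat.zero_le _) (Finset.mem_univ t)

lemma ncard_boundedExponents_zero (K : Type*) [Field K] :
    (boundedExponents n d 0 m).ncard = finrank K (homogeneousSubmodule (Fin (n + 1)) K m) := by
  have hset : boundedExponents n d 0 m = (⇑) '' {e : Fin (n + 1) →₀ ℕ | e.degree = m} := by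
    ext a
    refine ⟨fun ha => ⟨Finsupp.equivFunOnFinite.symm a, ?_, rfl⟩, ?_⟩
    · simpa [Finsupp.degree_eq_sum] using ha.1
    · rintro ⟨e, he, rfl⟩
      exact ⟨by simpa [Finsupp.degree_eq_sum] using he, fun t ht => absurd ht (Nat.not_lt_zero _)⟩
  rw [hset, Set.ncard_image_of_injective _ DFunLike.coe_injective, ← Nat.card_coe_set_eq,
    homogeneousSubmodule_eq_finsupp_supported,
    ← finrank_eq_nat_card_basis (basisRestrictSupport K _)]
  rfl

lemma boundedExponents_succ_of_lt (hmd : m < d) :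
    boundedExponents n d (k + 1) m = boundedExponents n d k m := by
  ext a
  refine ⟨fun ⟨hsum, ha⟩ => ⟨hsum, fun t ht => ha t (by omega)⟩,
    fun ⟨hsum, _⟩ => ⟨hsum, fun t _ => ?_⟩⟩
  have := Finset.single_le_sum (fun t _ => Nat.zero_le (a t)) (Finset.mem_univ t.succ)
  omega

lemma boundedExponents_sdiff_succ (hk : k < n) (hdm : d ≤ m) :
    boundedExponents n d k m \ boundedExponents n d (k + 1) m
      = (· + Pi.single (Fin.succ ⟨k, hk⟩) d) '' boundedExponents n d k (m - d) := by
  set e : Fin (n + 1) → ℕ := Pi.single (Fin.succ ⟨k, hk⟩) d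
  have he_succ : ∀ t : Fin n, (t : ℕ) < k → e t.succ = 0 := fun t ht =>
    Pi.single_eq_of_ne (by simp [Fin.ext_iff]; omega) _
  have hsum_e : ∀ b : Fin (n + 1) → ℕ, ∑ t, (b + e) t = ∑ t, b t + d := by
    simp [e, Finset.sum_add_distrib]
  ext a
  constructor
  · rintro ⟨⟨hsum, ha⟩, hnot⟩
    have hd : d ≤ a (Fin.succ ⟨k, hk⟩) := by
      by_contra hlt
      refine hnot ⟨hsum, fun t ht => ?_⟩
      rcases Nat.lt_succ_iff_lt_or_eq.mp ht with ht | ht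
      · exact ha t ht
      · rw [show t = ⟨k, hk⟩ from Fin.ext ht]; omega
    have hae : a - e + e = a := tsub_add_cancel_of_le fun t => by
      by_cases ht : t = Fin.succ ⟨k, hk⟩
      · subst ht; simpa [e] using hd
      · simp only [e, Pi.single_eq_of_ne ht, Nat.zero_le]
    refine ⟨a - e, ⟨?_, fun t ht => ?_⟩, hae⟩
    · have := hsum_e (a - e)
      rw [hae] at this
      omega
    · simpa [he_succ t ht] using ha t ht
  · rintro ⟨b, ⟨hsum, hb⟩, rfl⟩
    refine ⟨⟨by rw [hsum_e]; omega, fun t ht => by simpa [he_succ t ht] using hb t ht⟩, ?_⟩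
    rintro ⟨-, hlt⟩
    have := hlt ⟨k, hk⟩ (Nat.lt_succ_self k)
    simp [e] at this

lemma ncard_boundedExponents_succ (hk : k < n) (hdm : d ≤ m) :
    (boundedExponents n d (k + 1) m).ncard + (boundedExponents n d k (m - d)).ncard
      = (boundedExponents n d k m).ncard := by
  have hsub : boundedExponents n d (k + 1) m ⊆ boundedExponents n d k m :=
    fun a ⟨hsum, ha⟩ => ⟨hsum, fun t ht => ha t (by omega)⟩
  rw [add_comm, ← Set.ncard_image_of_injective _ (add_left_injective _),
    ← boundedExponents_sdiff_succ hk hdm,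
    Set.ncard_sdiff_add_ncard_of_subset hsub boundedExponents_finite]

lemma ncard_boundedExponents_self (hm : n * (d - 1) ≤ m) :
    (boundedExponents n d n m).ncard = d ^ n := by
  have hset : boundedExponents n d n m
      = (fun b : Fin n → Fin d =>
          (Fin.cons (m - ∑ t, (b t : ℕ)) (fun t => (b t : ℕ)) : Fin (n + 1) → ℕ)) '' Set.univ := by
    ext a
    constructor
    · rintro ⟨hsum, ha⟩
      refine ⟨fun t => ⟨a t.succ, ha t t.isLt⟩, trivial, ?_⟩
      funext t
      cases t using Fin.cases with
      | zero =>
        rw [Fin.sum_univ_succ] at hsum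
        simp only [Fin.cons_zero]
        omega
      | succ t => simp
    · rintro ⟨b, -, rfl⟩
      have hb : ∑ t, (b t : ℕ) ≤ n * (d - 1) := by
        simpa using Finset.sum_le_sum fun t (_ : t ∈ Finset.univ) => Nat.le_sub_one_of_lt (b t).isLt
      refine ⟨?_, fun t _ => by simp⟩
      rw [Fin.sum_univ_succ]
      simp only [Fin.cons_zero, Fin.cons_succ]
      omega
  rw [hset, Set.ncard_image_of_injective]
  · simp
  · intro b b' h
    funext t
    exact Fin.ext (congrFun (Fin.cons_inj.mp h).2 t)

end BoundedExponents

section HilbertFunction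

variable {K : Type*} [Field K] {n d : ℕ} {P : Fin n → MvPolynomial (Fin (n + 1)) K}

attribute [local instance] gradedAlgebra in
lemma isHomogeneous_prefixSpan {σ : Type*} {r : ℕ} {P : Fin r → MvPolynomial σ K}
    (hP : ∀ t, (P t).IsHomogeneous d) (k : ℕ) :
    (prefixSpan P k).IsHomogeneous (homogeneousSubmodule σ K) :=
  Ideal.homogeneous_span _ _ fun _ ⟨s, _, hs⟩ => ⟨d, hs ▸ hP s⟩

theorem finrank_gradedPiece_prefixSpan_add_ncard (hP : ∀ t, (P t).IsHomogeneous d)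
    (hreg : IsRegularModulo ⊥ P) {k : ℕ} (hk : k ≤ n) (m : ℕ) :
    finrank K (gradedPiece (prefixSpan P k) m) + (boundedExponents n d k m).ncard
      = finrank K (homogeneousSubmodule (Fin (n + 1)) K m) := by
  induction k generalizing m with
  | zero => simp [prefixSpan_zero, ncard_boundedExponents_zero K]
  | succ k ih =>
    have hI := isHomogeneous_prefixSpan hP k
    rw [prefixSpan_succ P hk]
    rcases lt_or_ge m d with hmd | hdm
    · rw [gradedPiece_sup_span_singleton_of_lt hI (hP _) hmd, boundedExponents_succ_of_lt hmd]
      exact ih (by omega) m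
    · have hreg_k : ∀ f, P ⟨k, hk⟩ * f ∈ prefixSpan P k → f ∈ prefixSpan P k := fun f h => by
        simpa using hreg ⟨k, hk⟩ f (by simpa using h)
      have := finrank_gradedPiece_sup_span_singleton hI hreg_k (hP _) hdm
      have := ncard_boundedExponents_succ (n := n) hk hdm
      have := ih (by omega) m
      have := ih (by omega) (m - d)
      omega

theorem finrank_gradedPiece_span_range_add_pow (hP : ∀ t, (P t).IsHomogeneous d)
    (hreg : IsRegularModulo ⊥ P) {m : ℕ} (hm : n * (d - 1) ≤ m) :
    finrank K (gradedPiece (Ideal.span (Set.range P)) m) + d ^ n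
      = finrank K (homogeneousSubmodule (Fin (n + 1)) K m) := by
  rw [← prefixSpan_self, ← ncard_boundedExponents_self hm]
  exact finrank_gradedPiece_prefixSpan_add_ncard hP hreg le_rfl m

end HilbertFunction

section Filtration

variable {n d u : ℕ} {P : Fin n → MvPolynomial (Fin (n + 1)) ℂ} {i i' : Fin n → ℕ}

lemma map_mulLeft_le_czFiltration {j : Fin n → ℕ} (hij : toLex i ≤ toLex j)
    (hj : d * ∑ t, j t ≤ u) :
    (homogeneousSubmodule (Fin (n + 1)) ℂ (u - d * ∑ t, j t)).map
      (LinearMap.mulLeft ℂ (∏ t, P t ^ j t)) ≤ czFiltration n d u P i :=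
  le_iSup_of_le j (le_iSup₂_of_le hij hj le_rfl)

lemma czFiltration_eq_map_sup (hi : d * ∑ t, i t ≤ u) (hlt : toLex i < toLex i')
    (hsucc : ∀ j : Fin n → ℕ, d * ∑ t, j t ≤ u → toLex i < toLex j → toLex i' ≤ toLex j) :
    czFiltration n d u P i = (homogeneousSubmodule (Fin (n + 1)) ℂ (u - d * ∑ t, i t)).map
      (LinearMap.mulLeft ℂ (∏ t, P t ^ i t)) ⊔ czFiltration n d u P i' := by
  refine le_antisymm (iSup₂_le fun j hij => iSup_le fun hj => ?_) (sup_le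
    (map_mulLeft_le_czFiltration le_rfl hi)
    (iSup₂_le fun j hij => iSup_le fun hj => map_mulLeft_le_czFiltration (hlt.le.trans hij) hj))
  rcases hij.eq_or_lt with heq | hlt'
  · rw [toLex.injective heq]
    exact le_sup_left
  · exact le_sup_of_le_right (map_mulLeft_le_czFiltration (hsucc j hj hlt') hj)

lemma czFiltration_le_lexAboveSpan (hlt : toLex i < toLex i') :
    czFiltration n d u P i' ≤ (lexAboveSpan P i).restrictScalars ℂ :=
  iSup₂_le fun j hij => iSup_le fun _ => by
    rintro _ ⟨g, -, rfl⟩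
    exact Ideal.mul_mem_right g _ (Ideal.subset_span ⟨j, hlt.trans_le hij, rfl⟩)

lemma inf_comap_czFiltration (hP : ∀ t, (P t).IsHomogeneous d) (hreg : IsRegularModulo ⊥ P)
    (hi : d * ∑ t, i t + d ≤ u) (hlt : toLex i < toLex i')
    (hsucc : ∀ j : Fin n → ℕ, d * ∑ t, j t ≤ u → toLex i < toLex j → toLex i' ≤ toLex j) :
    homogeneousSubmodule (Fin (n + 1)) ℂ (u - d * ∑ t, i t)
        ⊓ (czFiltration n d u P i').comap (LinearMap.mulLeft ℂ (∏ t, P t ^ i t))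
      = gradedPiece (Ideal.span (Set.range P)) (u - d * ∑ t, i t) := by
  ext f
  refine ⟨fun ⟨hfV, hfW⟩ => ⟨?_, hfV⟩, fun ⟨hfI, hfV⟩ => ⟨hfV, ?_⟩⟩
  · simpa using hreg.mem_of_prod_pow_mul_mem i
      (Ideal.mem_sup_right (czFiltration_le_lexAboveSpan hlt hfW))
  obtain ⟨h, hh, rfl⟩ := exists_sum_mul_of_mem_span_range hP (by omega) hfV hfI
  show (∏ t, P t ^ i t) * ∑ s, h s * P s ∈ czFiltration n d u P i'
  rw [Finset.mul_sum]
  refine Submodule.sum_mem _ fun s _ => ?_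
  set j : Fin n → ℕ := i + Pi.single s 1
  have hj_sum : ∑ t, j t = ∑ t, i t + 1 := by simp [j, Finset.sum_add_distrib]
  have hj_prod : ∏ t, P t ^ j t = (∏ t, P t ^ i t) * P s := by
    simp only [j, Pi.add_apply, pow_add, Finset.prod_mul_distrib, Pi.single_apply, pow_ite,
      pow_one, pow_zero, Finset.prod_ite_eq', Finset.mem_univ, if_true]
  have hj : d * ∑ t, j t ≤ u := by rw [hj_sum, mul_add_one]; exact hi
  have hij : toLex i < toLex j := Pi.toLex_strictMono (lt_add_of_pos_right i (by simp))
  refine map_mulLeft_le_czFiltration (hsucc j hj hij) hj ⟨h s, ?_, ?_⟩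
  · rw [hj_sum, mul_add_one, ← Nat.sub_sub]
    exact hh s
  · simp only [LinearMap.mulLeft_apply, hj_prod]
    ring

end Filtration

theorem stmt_6_general (n d u : ℕ) (hn : 1 ≤ n)
    (P : Fin n → MvPolynomial (Fin (n + 1)) ℂ)
    (hPhom : ∀ t, (P t).IsHomogeneous d)
    (hPreg : ∀ t : Fin n, ∀ f : MvPolynomial (Fin (n + 1)) ℂ,
      P t * f ∈ Ideal.span {g | ∃ s : Fin n, s < t ∧ g = P s} →
      f ∈ Ideal.span {g | ∃ s : Fin n, s < t ∧ g = P s})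
    (i i' : Fin n → ℕ)
    (hi : d * (∑ t, i t) ≤ u)
    (hlt : toLex i < toLex i')
    (hsucc : ∀ j : Fin n → ℕ, d * (∑ t, j t) ≤ u → toLex i < toLex j →
      toLex i' ≤ toLex j)
    (hbound : d * (∑ t, i t) + n * d < u) :
    Module.finrank ℂ
      (↥(czFiltration n d u P i) ⧸
        Submodule.comap (czFiltration n d u P i).subtype (czFiltration n d u P i'))
      = d ^ n := by
  have hreg : IsRegularModulo ⊥ P := fun t f h => by
    rw [bot_sup_eq] at h ⊢
    exact hPreg t f h
  have hnd : d ≤ n * d := Nat.le_mul_of_pos_left d hn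
  have hquot := Submodule.finrank_quotient_add_finrank_inf_comap
    (LinearMap.mulLeft ℂ (∏ t, P t ^ i t)) (czFiltration_eq_map_sup hi hlt hsucc)
  rw [inf_comap_czFiltration hPhom hreg (by omega) hlt hsucc] at hquot
  have hdim := finrank_gradedPiece_span_range_add_pow hPhom hreg
    (m := u - d * ∑ t, i t) (by have := Nat.mul_le_mul_left n (Nat.sub_le d 1); omega)
  omega

/-- If `P_1, …, P_n` are homogeneous of degree `d` and form a regular sequence in
`ℂ[x_0, …, x_n]`, `d ∣ u`, `(i)'` is the immediate lexicographic successor of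
`(i)` among tuples `(j)` with `dσ(j) ≤ u`, and `dσ(i) < u − nd`, then
`dim_ℂ (W_{(i)} / W_{(i)'}) = d^n`. -/
theorem stmt_6 (n d u : ℕ) (hn : 1 ≤ n) (hd : 1 ≤ d) (hu : 0 < u) (hdu : d ∣ u)
    (P : Fin n → MvPolynomial (Fin (n + 1)) ℂ)
    (hPhom : ∀ t, (P t).IsHomogeneous d)
    (hPreg : ∀ t : Fin n, ∀ f : MvPolynomial (Fin (n + 1)) ℂ,
      P t * f ∈ Ideal.span {g | ∃ s : Fin n, s < t ∧ g = P s} →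
      f ∈ Ideal.span {g | ∃ s : Fin n, s < t ∧ g = P s})
    (i i' : Fin n → ℕ)
    (hi : d * (∑ t, i t) ≤ u) (hi' : d * (∑ t, i' t) ≤ u)
    (hlt : toLex i < toLex i')
    (hsucc : ∀ j : Fin n → ℕ, d * (∑ t, j t) ≤ u → toLex i < toLex j →
      toLex i' ≤ toLex j)
    (hbound : d * (∑ t, i t) + n * d < u) :
    Module.finrank ℂ
      (↥(czFiltration n d u P i) ⧸
        Submodule.comap (czFiltration n d u P i).subtype (czFiltration n d u P i'))
      = d ^ n :=
  stmt_6_general n d u hn P hPhom hPreg i i' hi hlt hsucc hbound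
end

section
/- Let N ≥ k ≥ 0 be integers and M ≥ 0 a real number. Let a_1 ≥ a_2 ≥ ⋯ ≥ a_{N+1} ≥ 0 be real numbers, and let b_1, …, b_{k+1} be nonnegative real numbers with b_1 ≥ a_1 and b_j ≥ a_{N−k+j} for 2 ≤ j ≤ k+1. Then Σ_{i=1}^{N+1} max(a_i − M, 0) ≤ (N−k+1) · Σ_{j=1}^{k+1} max(b_j − M, 0). -/
/-!
Send each index `i` of `a` to the index `i - (N - k)` (truncated subtraction) of `b`. Every
`a i` is then dominated by the `b` it is sent to, since the first `N - k + 1` terms of `a` are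
at most `a 0 ≤ b 0`, and every index of `b` receives at most `N - k + 1` indices of `a`.
-/

open Finset

theorem sum_le_mul_sum_of_le_comp {ι κ : Type*} [Fintype ι] [Fintype κ] [DecidableEq κ]
    (g : ι → κ) (u : ι → ℝ) (v : κ → ℝ) (c : ℕ) (hv : ∀ j, 0 ≤ v j)
    (huv : ∀ i, u i ≤ v (g i)) (hfiber : ∀ j, #{i | g i = j} ≤ c) :
    ∑ i, u i ≤ c * ∑ j, v j := calc
  ∑ i, u i ≤ ∑ i, v (g i) := sum_le_sum fun i _ => huv i
  _ = ∑ j, (#{i | g i = j} : ℝ) * v j := by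
    rw [← sum_fiberwise univ g]
    refine sum_congr rfl fun j _ => ?_
    rw [sum_congr rfl fun i hi => congrArg v (mem_filter.mp hi).2, sum_const, nsmul_eq_mul]
  _ ≤ ∑ j, (c : ℝ) * v j :=
    sum_le_sum fun j _ => mul_le_mul_of_nonneg_right (mod_cast hfiber j) (hv j)
  _ = c * ∑ j, v j := (mul_sum _ _ _).symm

theorem card_fiber_le_of_val_eq_sub {n m d : ℕ} (g : Fin n → Fin m)
    (hg : ∀ i, (g i : ℕ) = i - d) (j : Fin m) : #{i | g i = j} ≤ d + 1 := by
  calc #{i | g i = j} ≤ #(range (d + 1)) := by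
        refine card_le_card_of_injOn (fun i => min (i : ℕ) d)
          (fun i _ => mem_range.mpr (Nat.lt_succ_of_le (min_le_right _ _))) fun i₁ h₁ i₂ h₂ hmin => ?_
        simp only [coe_filter, mem_univ, true_and, Set.mem_ofPred_eq] at h₁ h₂
        have h₁ := hg i₁
        have h₂ := hg i₂
        simp only at hmin
        ext
        omega
    _ = d + 1 := card_range _

/-- Let `N ≥ k ≥ 0`, `M ≥ 0`. If `a_1 ≥ ⋯ ≥ a_{N+1} ≥ 0`, and `b_1, …, b_{k+1} ≥ 0`
satisfy `b_1 ≥ a_1` and `b_j ≥ a_{N−k+j}` for `2 ≤ j ≤ k+1`, then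
`Σ_{i=1}^{N+1} max(a_i − M, 0) ≤ (N−k+1) · Σ_{j=1}^{k+1} max(b_j − M, 0)`.
(Indices are `0`-based below.) -/
theorem stmt_13 (N k : ℕ) (hkN : k ≤ N) (M : ℝ)
    (a : Fin (N + 1) → ℝ)
    (hmono : ∀ i j : Fin (N + 1), i ≤ j → a j ≤ a i)
    (b : Fin (k + 1) → ℝ)
    (hb1 : a 0 ≤ b 0)
    (hbj : ∀ j : Fin (k + 1), 1 ≤ j.val →
      a ⟨N - k + j.val, by have := j.isLt; omega⟩ ≤ b j) :
    ∑ i, max (a i - M) 0 ≤ ((N : ℝ) - (k : ℝ) + 1) * ∑ j, max (b j - M) 0 := by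
  let g : Fin (N + 1) → Fin (k + 1) := fun i => ⟨i - (N - k), by omega⟩
  have hab : ∀ i, a i ≤ b (g i) := by
    intro i
    by_cases hi : (i : ℕ) ≤ N - k
    · have hgi : g i = 0 := Fin.ext (Nat.sub_eq_zero_of_le hi)
      exact hgi ▸ (hmono 0 i (Fin.zero_le i)).trans hb1
    · simpa [g, Nat.add_sub_cancel' (not_le.mp hi).le] using hbj (g i) (by simp [g]; omega)
  have key := sum_le_mul_sum_of_le_comp g _ (fun j => max (b j - M) 0) (N - k + 1)
    (fun j => le_max_right _ _) (fun i => max_le_max_right 0 (sub_le_sub_right (hab i) M))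
    (card_fiber_le_of_val_eq_sub g fun _ => rfl)
  rwa [Nat.cast_add, Nat.cast_sub hkN, Nat.cast_one] at key
end

section
/- Let g_1, …, g_K : ℂ → ℂ be holomorphic functions and let W = det(g_j^{(i−1)})_{1 ≤ i, j ≤ K} be their Wronskian, where g^{(i)} denotes the i-th derivative. Assume W is not identically zero. Then for every point z_0 ∈ ℂ, the order of vanishing of W at z_0 satisfies ord_{z_0}(W) ≥ Σ_{j=1}^{K} max(0, ord_{z_0}(g_j) − (K−1)). -/
/-!
Expanding the determinant over permutations, `W = ∑_σ sign σ · ∏_j g_j^{(σ j)}`. Each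
differentiation lowers the order of vanishing by at most one, and `σ j ≤ K - 1`, so the
`σ`-term vanishes to order at least `∑_j (ord g_j - (K - 1))`, orders being additive on
products. A sum vanishes at least to the smallest order of its summands.
-/

section AnalyticOrder

variable {𝕜 E : Type*} [NontriviallyNormedField 𝕜] [NormedAddCommGroup E] [NormedSpace 𝕜 E]
  {z₀ : 𝕜}

lemma le_analyticOrderAt_finset_sum {ι : Type*} {s : Finset ι} {f : ι → 𝕜 → E} {n : ℕ∞}
    (h : ∀ i ∈ s, n ≤ analyticOrderAt (f i) z₀) :
    n ≤ analyticOrderAt (fun z => ∑ i ∈ s, f i z) z₀ := by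
  classical
  induction s using Finset.induction with
  | empty => simp [analyticOrderAt_eq_top.mpr]
  | insert a s ha ih =>
    simp only [Finset.sum_insert ha]
    refine le_trans ?_ (le_analyticOrderAt_add (f := f a) (g := fun z => ∑ i ∈ s, f i z))
    simp only [Finset.forall_mem_insert] at h
    exact le_min h.1 (ih h.2)

lemma le_analyticOrderAt_const_smul (c : 𝕜) (f : 𝕜 → E) :
    analyticOrderAt f z₀ ≤ analyticOrderAt (fun z => c • f z) z₀ := by
  by_cases hf : AnalyticAt 𝕜 f z₀
  · exact (analyticOrderAt_smul analyticAt_const hf).symm ▸ le_add_self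
  · simp [analyticOrderAt_of_not_analyticAt hf]

lemma analyticOrderAt_finset_prod {ι : Type*} {s : Finset ι} {f : ι → 𝕜 → 𝕜}
    (hf : ∀ i ∈ s, AnalyticAt 𝕜 (f i) z₀) :
    analyticOrderAt (fun z => ∏ i ∈ s, f i z) z₀ = ∑ i ∈ s, analyticOrderAt (f i) z₀ := by
  classical
  induction s using Finset.induction with
  | empty => exact analyticOrderAt_eq_zero.mpr (.inr (by simp))
  | insert a s ha ih =>
    simp only [Finset.forall_mem_insert] at hf
    simp only [Finset.prod_insert ha, Finset.sum_insert ha]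
    rw [← ih hf.2]
    exact analyticOrderAt_mul hf.1 (Finset.analyticAt_fun_prod _ hf.2)

variable [CompleteSpace E] {f : 𝕜 → E}

lemma AnalyticAt.iteratedDeriv (hf : AnalyticAt 𝕜 f z₀) (n : ℕ) :
    AnalyticAt 𝕜 (_root_.iteratedDeriv n f) z₀ := by
  rw [iteratedDeriv_eq_iterate]
  exact hf.iterated_deriv n

variable [CharZero 𝕜]

lemma AnalyticAt.analyticOrderAt_sub_one_le_deriv (hf : AnalyticAt 𝕜 f z₀) :
    analyticOrderAt f z₀ - 1 ≤ analyticOrderAt (deriv f) z₀ := by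
  by_cases hfz : f z₀ = 0
  · have h := hf.analyticOrderAt_deriv_add_one
    simp only [hfz, sub_zero] at h
    rw [← h]
    exact tsub_le_iff_right.mpr le_rfl
  · simp [analyticOrderAt_eq_zero.mpr (.inr hfz)]

lemma AnalyticAt.analyticOrderAt_sub_le_iteratedDeriv (hf : AnalyticAt 𝕜 f z₀) (n : ℕ) :
    analyticOrderAt f z₀ - n ≤ analyticOrderAt (_root_.iteratedDeriv n f) z₀ := by
  induction n with
  | zero => simp
  | succ n ih =>
    rw [iteratedDeriv_succ, Nat.cast_succ, ← tsub_tsub]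
    exact (tsub_le_tsub_right ih 1).trans (hf.iteratedDeriv n).analyticOrderAt_sub_one_le_deriv

end AnalyticOrder

section Wronskian

variable {𝕜 : Type*} [NontriviallyNormedField 𝕜] {K : ℕ}

noncomputable def wronskian (g : Fin K → 𝕜 → 𝕜) (z : 𝕜) : 𝕜 :=
  (Matrix.of fun i j : Fin K => iteratedDeriv i.val (g j) z).det

lemma wronskian_eq_sum_perm (g : Fin K → 𝕜 → 𝕜) :
    wronskian g = fun z => ∑ σ : Equiv.Perm (Fin K),
      (Equiv.Perm.sign σ : 𝕜) • ∏ j, iteratedDeriv (σ j).val (g j) z := by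
  funext z
  simp [wronskian, Matrix.det_apply']

theorem sum_analyticOrderAt_sub_le_analyticOrderAt_wronskian [CharZero 𝕜] [CompleteSpace 𝕜]
    {g : Fin K → 𝕜 → 𝕜} {z₀ : 𝕜} (hg : ∀ j, AnalyticAt 𝕜 (g j) z₀) :
    ∑ j, (analyticOrderAt (g j) z₀ - (K - 1 : ℕ)) ≤ analyticOrderAt (wronskian g) z₀ := by
  rw [wronskian_eq_sum_perm]
  refine le_analyticOrderAt_finset_sum fun σ _ => le_trans ?_ (le_analyticOrderAt_const_smul _ _)
  rw [analyticOrderAt_finset_prod fun j _ => (hg j).iteratedDeriv _]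
  refine Finset.sum_le_sum fun j _ => le_trans ?_ ((hg j).analyticOrderAt_sub_le_iteratedDeriv _)
  exact tsub_le_tsub_left (Nat.cast_le.mpr (Nat.le_sub_one_of_lt (σ j).isLt)) _

end Wronskian

theorem stmt_15_general (K : ℕ) (g : Fin K → ℂ → ℂ) (hg : ∀ j, Differentiable ℂ (g j)) :
    ∀ z₀ : ℂ,
      ∀ hWa : AnalyticAt ℂ
        (fun z : ℂ => Matrix.det (Matrix.of fun i j : Fin K => iteratedDeriv i.val (g j) z)) z₀,
      ∑ j : Fin K, (analyticOrderAt (g j) z₀ - ((K - 1 : ℕ) : ℕ∞)) ≤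
        analyticOrderAt
          (fun z : ℂ => Matrix.det (Matrix.of fun i j : Fin K => iteratedDeriv i.val (g j) z)) z₀ :=
  fun z₀ _ => sum_analyticOrderAt_sub_le_analyticOrderAt_wronskian fun j => (hg j).analyticAt z₀

/-- Let `g_1, …, g_K : ℂ → ℂ` be entire and let `W = det(g_j^{(i−1)})` be their
Wronskian, assumed not identically zero. Then at every `z₀ ∈ ℂ` the vanishing
order of `W` satisfies `ord_{z₀}(W) ≥ Σ_j max(0, ord_{z₀}(g_j) − (K−1))`
(the subtraction on `ℕ∞` below is truncated, so it equals the positive part). -/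
theorem stmt_15 (K : ℕ) (g : Fin K → ℂ → ℂ) (hg : ∀ j, Differentiable ℂ (g j))
    (hW : ∃ z : ℂ,
      Matrix.det (Matrix.of fun i j : Fin K => iteratedDeriv i.val (g j) z) ≠ 0) :
    ∀ z₀ : ℂ,
      ∀ hWa : AnalyticAt ℂ
        (fun z : ℂ => Matrix.det (Matrix.of fun i j : Fin K => iteratedDeriv i.val (g j) z)) z₀,
      ∑ j : Fin K, (analyticOrderAt (g j) z₀ - ((K - 1 : ℕ) : ℕ∞)) ≤
        analyticOrderAt
          (fun z : ℂ => Matrix.det (Matrix.of fun i j : Fin K => iteratedDeriv i.val (g j) z)) z₀ :=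
  stmt_15_general K g hg
end

section
/- Let n ≥ 1, k ≥ 1 and N ≥ k be integers, let Q_1, …, Q_{N+1} ∈ ℂ[x_0, …, x_n] be homogeneous polynomials of the same degree d ≥ 1, and let P_1 = Q_1 and P_t = Σ_{j=2}^{N−k+t} c_{tj} Q_j with arbitrary coefficients c_{tj} ∈ ℂ for t = 2, …, k+1. Then there exists a constant D > 0 such that for every ω ∈ ℂ^{n+1} satisfying |Q_1(ω)| ≤ |Q_2(ω)| ≤ ⋯ ≤ |Q_{N+1}(ω)|, one has ∏_{t=1}^{k+1} |P_t(ω)|^{N−k+1} ≤ D · ‖ω‖^{(N−k)kd} · ∏_{j=1}^{N+1} |Q_j(ω)|, where ‖ω‖ = (|ω_0|^2 + ⋯ + |ω_n|^2)^{1/2}. -/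
open MvPolynomial

/-!
Write `a j = ‖Q j(ω)‖`, increasing in `j` and at most `C‖ω‖^d` by homogeneity. As `P 0 = Q 0`
carries the smallest value, `‖P 0(ω)‖^(N-k+1) ≤ a 0 ⋯ a (N-k)`. For `t ≥ 1`, `P t` only involves
`Q j` with `j ≤ N-k+t`, so `‖P t(ω)‖ ≤ B a (N-k+t)` and
`‖P t(ω)‖^(N-k+1) ≤ B^(N-k+1) (C‖ω‖^d)^(N-k) a (N-k+t)`.
Multiplying these `k+1` estimates uses every `a j` exactly once.
-/

section NormEval

variable {𝕜 σ : Type*} [NormedField 𝕜]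

theorem norm_prod_pow_le_pow_sum (μ : σ →₀ ℕ) (ω : σ → 𝕜) {s : ℝ} (hs : ∀ i, ‖ω i‖ ≤ s) :
    ‖∏ i ∈ μ.support, ω i ^ μ i‖ ≤ s ^ ∑ i ∈ μ.support, μ i := by
  rw [norm_prod, ← Finset.prod_pow_eq_pow_sum]
  refine Finset.prod_le_prod (fun i _ => norm_nonneg _) fun i _ => ?_
  rw [norm_pow]
  exact pow_le_pow_left₀ (norm_nonneg _) (hs i) _

theorem norm_eval_le_of_isHomogeneous {Q : MvPolynomial σ 𝕜} {d : ℕ} (hQ : Q.IsHomogeneous d)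
    (ω : σ → 𝕜) {s : ℝ} (hs : ∀ i, ‖ω i‖ ≤ s) :
    ‖eval ω Q‖ ≤ (∑ μ ∈ Q.support, ‖coeff μ Q‖) * s ^ d := by
  rw [eval_eq, Finset.sum_mul]
  refine (norm_sum_le _ _).trans (Finset.sum_le_sum fun μ hμ => ?_)
  rw [norm_mul, hQ.degree_eq_sum_deg_support hμ]
  exact mul_le_mul_of_nonneg_left (norm_prod_pow_le_pow_sum μ ω hs) (norm_nonneg _)

theorem norm_le_sqrt_sum_sq [Fintype σ] (ω : σ → 𝕜) (i : σ) : ‖ω i‖ ≤ √(∑ j, ‖ω j‖ ^ 2) :=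
  Real.le_sqrt_of_sq_le <|
    Finset.single_le_sum (f := fun j => ‖ω j‖ ^ 2) (fun _ _ => sq_nonneg _) (Finset.mem_univ i)

theorem exists_norm_eval_le_of_isHomogeneous [Fintype σ] {ι : Type*} [Fintype ι]
    {Q : ι → MvPolynomial σ 𝕜} {d : ℕ} (hQ : ∀ j, (Q j).IsHomogeneous d) :
    ∃ C : ℝ, 0 < C ∧ ∀ j ω, ‖eval ω (Q j)‖ ≤ C * √(∑ i, ‖ω i‖ ^ 2) ^ d := by
  set C₀ : ι → ℝ := fun j => ∑ μ ∈ (Q j).support, ‖coeff μ (Q j)‖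
  have hC₀ : ∀ j, 0 ≤ C₀ j := fun j => Finset.sum_nonneg fun _ _ => norm_nonneg _
  refine ⟨∑ j, C₀ j + 1, by positivity, fun j ω => ?_⟩
  refine (norm_eval_le_of_isHomogeneous (hQ j) ω (norm_le_sqrt_sum_sq ω)).trans ?_
  gcongr
  calc C₀ j ≤ ∑ j, C₀ j := Finset.single_le_sum (fun j _ => hC₀ j) (Finset.mem_univ j)
    _ ≤ ∑ j, C₀ j + 1 := le_add_of_nonneg_right zero_le_one

theorem norm_eval_sum_smul_le {ι : Type*} (S : Finset ι) (c : ι → 𝕜)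
    (Q : ι → MvPolynomial σ 𝕜) (ω : σ → 𝕜) {A : ℝ} (hA : ∀ j ∈ S, ‖eval ω (Q j)‖ ≤ A) :
    ‖eval ω (∑ j ∈ S, c j • Q j)‖ ≤ (∑ j ∈ S, ‖c j‖) * A := by
  rw [map_sum, Finset.sum_mul]
  refine (norm_sum_le _ _).trans (Finset.sum_le_sum fun j hj => ?_)
  rw [smul_eval, norm_mul]
  exact mul_le_mul_of_nonneg_left (hA j hj) (norm_nonneg _)

end NormEval

theorem prod_pow_le_mul_prod_of_monotone {m k : ℕ} {a : Fin (m + 1 + k) → ℝ} (ha : Monotone a)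
    (ha₀ : 0 ≤ a 0) {M B : ℝ} (hM : ∀ j, a j ≤ M) (hB : 0 ≤ B) {p : Fin (k + 1) → ℝ}
    (hp : ∀ t, 0 ≤ p t) (hp₀ : p 0 ≤ a 0) (hpt : ∀ t : Fin k, p t.succ ≤ B * a (Fin.natAdd _ t)) :
    ∏ t, p t ^ (m + 1) ≤ B ^ ((m + 1) * k) * M ^ (m * k) * ∏ j, a j := by
  have ha_nonneg : ∀ j, 0 ≤ a j := fun j => ha₀.trans (ha (Fin.zero_le j))
  have low : p 0 ^ (m + 1) ≤ ∏ i : Fin (m + 1), a (Fin.castAdd k i) :=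
    calc p 0 ^ (m + 1) ≤ ∏ _i : Fin (m + 1), a 0 := by
          rw [Fin.prod_const]; exact pow_le_pow_left₀ (hp 0) hp₀ _
      _ ≤ ∏ i : Fin (m + 1), a (Fin.castAdd k i) :=
          Finset.prod_le_prod (fun _ _ => ha₀) fun i _ => ha (Fin.zero_le _)
  have high : ∀ t : Fin k,
      p t.succ ^ (m + 1) ≤ B ^ (m + 1) * M ^ m * a (Fin.natAdd _ t) := fun t =>
    calc p t.succ ^ (m + 1) ≤ (B * a (Fin.natAdd _ t)) ^ (m + 1) :=
          pow_le_pow_left₀ (hp _) (hpt t) _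
      _ = B ^ (m + 1) * a (Fin.natAdd _ t) ^ m * a (Fin.natAdd _ t) := by ring
      _ ≤ B ^ (m + 1) * M ^ m * a (Fin.natAdd _ t) := by
          have := ha_nonneg (Fin.natAdd _ t)
          gcongr
          exact hM _
  calc ∏ t, p t ^ (m + 1)
      = p 0 ^ (m + 1) * ∏ t : Fin k, p t.succ ^ (m + 1) := Fin.prod_univ_succ _
    _ ≤ (∏ i : Fin (m + 1), a (Fin.castAdd k i)) *
          ∏ t : Fin k, B ^ (m + 1) * M ^ m * a (Fin.natAdd _ t) := by
        refine mul_le_mul low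
          (Finset.prod_le_prod (fun t _ => pow_nonneg (hp _) _) fun t _ => high t)
          (Finset.prod_nonneg fun t _ => pow_nonneg (hp _) _)
          (Finset.prod_nonneg fun i _ => ha_nonneg _)
    _ = B ^ ((m + 1) * k) * M ^ (m * k) * ∏ j, a j := by
        rw [Fin.prod_univ_add a, Finset.prod_mul_distrib, Fin.prod_const, pow_mul, pow_mul]
        ring

theorem stmt_16_general (n k N d : ℕ) (hkN : k ≤ N)
    (Q : Fin (N + 1) → MvPolynomial (Fin (n + 1)) ℂ)
    (hQhom : ∀ j, (Q j).IsHomogeneous d)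
    (c : Fin (k + 1) → Fin (N + 1) → ℂ)
    (P : Fin (k + 1) → MvPolynomial (Fin (n + 1)) ℂ)
    (hP0 : P 0 = Q 0)
    (hPt : ∀ t : Fin (k + 1), 1 ≤ t.val →
      P t = ∑ j ∈ Finset.univ.filter
          (fun j : Fin (N + 1) => 1 ≤ j.val ∧ j.val ≤ N - k + t.val),
        c t j • Q j) :
    ∃ D : ℝ, 0 < D ∧ ∀ ω : Fin (n + 1) → ℂ,
      (∀ i j : Fin (N + 1), i ≤ j →
        ‖eval ω (Q i)‖ ≤ ‖eval ω (Q j)‖) →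
      ∏ t : Fin (k + 1), ‖eval ω (P t)‖ ^ (N - k + 1)
        ≤ D * (Real.sqrt (∑ i, ‖ω i‖ ^ 2)) ^ ((N - k) * k * d)
            * ∏ j : Fin (N + 1), ‖eval ω (Q j)‖ := by
  obtain ⟨m, rfl⟩ := Nat.exists_eq_add_of_le' hkN
  rw [Nat.add_sub_cancel] at hPt ⊢
  obtain ⟨C, hC, hQC⟩ := exists_norm_eval_le_of_isHomogeneous hQhom
  set B : ℝ := ∑ t, ∑ j, ‖c t j‖ + 1
  have hcB : ∀ t (S : Finset (Fin (m + k + 1))), ∑ j ∈ S, ‖c t j‖ ≤ B := fun t S =>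
    (Finset.sum_le_univ_sum_of_nonneg fun _ => norm_nonneg _).trans <|
      (Finset.single_le_sum (f := fun t => ∑ j, ‖c t j‖)
        (fun _ _ => Finset.sum_nonneg fun _ _ => norm_nonneg _) (Finset.mem_univ t)).trans <|
      le_add_of_nonneg_right zero_le_one
  refine ⟨B ^ ((m + 1) * k) * C ^ (m * k), by positivity, fun ω hω => ?_⟩
  have hcast : m + 1 + k = m + k + 1 := by omega
  have hPQ (t : Fin k) :
      ‖eval ω (P t.succ)‖ ≤ B * ‖eval ω (Q ((Fin.natAdd _ t).cast hcast))‖ := by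
    rw [hPt t.succ (by simp)]
    refine (norm_eval_sum_smul_le _ _ _ ω fun j hj => hω _ _ ?_).trans
      (mul_le_mul_of_nonneg_right (hcB _ _) (norm_nonneg _))
    simp only [Finset.mem_filter, Finset.mem_univ, true_and, Fin.val_succ] at hj
    simp only [Fin.le_def, Fin.val_cast, Fin.val_natAdd]
    omega
  have key := prod_pow_le_mul_prod_of_monotone (a := fun j => ‖eval ω (Q (j.cast hcast))‖)
    (fun _ _ h => hω _ _ h) (norm_nonneg _) (fun j => hQC _ ω) (by positivity)
    (fun t => norm_nonneg (eval ω (P t))) (by rw [hP0]; rfl) hPQ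
  rw [Fin.prod_congr' (fun j => ‖eval ω (Q j)‖) hcast] at key
  exact key.trans_eq (by ring)

/-- Let `Q_1, …, Q_{N+1}` be homogeneous polynomials of the same degree `d ≥ 1`,
`P_1 = Q_1` and `P_t = Σ_{j=2}^{N−k+t} c_{tj}Q_j` for `t = 2, …, k+1`. Then there
is `D > 0` such that for all `ω` with `|Q_1(ω)| ≤ ⋯ ≤ |Q_{N+1}(ω)|`:
`∏_t |P_t(ω)|^{N−k+1} ≤ D·‖ω‖^{(N−k)kd}·∏_j |Q_j(ω)|`.
(Indices are `0`-based below: `P 0 = Q 0` and, for `1 ≤ t ≤ k`,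
`P t` is a linear combination of the `Q j` with `1 ≤ j ≤ N−k+t`.) -/
theorem stmt_16 (n k N d : ℕ) (hn : 1 ≤ n) (hk : 1 ≤ k) (hkN : k ≤ N) (hd : 1 ≤ d)
    (Q : Fin (N + 1) → MvPolynomial (Fin (n + 1)) ℂ)
    (hQhom : ∀ j, (Q j).IsHomogeneous d)
    (c : Fin (k + 1) → Fin (N + 1) → ℂ)
    (P : Fin (k + 1) → MvPolynomial (Fin (n + 1)) ℂ)
    (hP0 : P 0 = Q 0)
    (hPt : ∀ t : Fin (k + 1), 1 ≤ t.val →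
      P t = ∑ j ∈ Finset.univ.filter
          (fun j : Fin (N + 1) => 1 ≤ j.val ∧ j.val ≤ N - k + t.val),
        c t j • Q j) :
    ∃ D : ℝ, 0 < D ∧ ∀ ω : Fin (n + 1) → ℂ,
      (∀ i j : Fin (N + 1), i ≤ j →
        ‖eval ω (Q i)‖ ≤ ‖eval ω (Q j)‖) →
      ∏ t : Fin (k + 1), ‖eval ω (P t)‖ ^ (N - k + 1)
        ≤ D * (Real.sqrt (∑ i, ‖ω i‖ ^ 2)) ^ ((N - k) * k * d)
            * ∏ j : Fin (N + 1), ‖eval ω (Q j)‖ :=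
  stmt_16_general n k N d hkN Q hQhom c P hP0 hPt
end
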